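/- arXiv:2506.15715 — 2 statements merged into one kernel-verified Lean document; each statement's English description precedes it below -/
import Mathlib

section
/- There exists a point ξ ∈ [0,1] whose forward orbit under the full tent map T(x) = min(2x, 2-2x) is dense in [0,1]: for every x ∈ [0,1] and every ε > 0, there exists m ∈ ℕ with |x - T^m(ξ)| < ε. -/
noncomputable section TentProof



def tentT : ℝ → ℝ := fun x => min (2 * x) (2 - 2 * x)

lemma tentT_eq (u : ℝ) : tentT u = 1 - |2 * u - 1| := by
  unfold tentT
  rcases le_total u (1/2) with h | h
  · rw [abs_of_nonpos (by linarith), min_eq_left (by linarith)]; ring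
  · rw [abs_of_nonneg (by linarith), min_eq_right (by linarith)]; ring

lemma tentT_lip (u v : ℝ) : |tentT u - tentT v| ≤ 2 * |u - v| := by
  rw [tentT_eq, tentT_eq, show 1 - |2*u-1| - (1 - |2*v-1|) = |2*v-1| - |2*u-1| by ring]
  calc |(|2*v-1| - |2*u-1|)| ≤ |2*v-1 - (2*u-1)| := abs_abs_sub_abs_le_abs_sub _ _
    _ = 2 * |u - v| := by
        rw [show 2*v-1-(2*u-1) = 2*(v-u) by ring, abs_mul, abs_sub_comm]; norm_num

lemma tentT_key (y : ℝ) : tentT (tentT (Int.fract y)) = tentT (Int.fract (2 * y)) := by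
  set f := Int.fract y with hf
  have hf0 : 0 ≤ f := Int.fract_nonneg y
  have hf1 : f < 1 := Int.fract_lt_one y
  have h2y : Int.fract (2 * y) = Int.fract (2 * f) := by
    have hy : 2 * y = ((2 * ⌊y⌋ : ℤ) : ℝ) + 2 * f := by
      have := Int.floor_add_fract y
      push_cast
      rw [hf]
      linarith
    rw [hy, Int.fract_intCast_add]
  rw [h2y]
  rcases lt_or_ge f (1/2) with h | h
  · rw [Int.fract_eq_self.2 ⟨by linarith, by linarith⟩,
      show tentT f = 2 * f by rw [tentT_eq, abs_of_nonpos (by linarith)]; ring]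
  · have hfr : Int.fract (2 * f) = 2 * f - 1 := by
      have h1 : Int.fract (2 * f - (1:ℤ)) = Int.fract (2 * f) := Int.fract_sub_intCast _ _
      rw [← h1]
      push_cast
      exact Int.fract_eq_self.2 ⟨by linarith, by linarith⟩
    rw [hfr, show tentT f = 2 - 2 * f by rw [tentT_eq, abs_of_nonneg (by linarith)]; ring,
      tentT_eq, tentT_eq, show 2*(2-2*f)-1 = -(2*(2*f-1)-1) by ring, abs_neg]

lemma tentT_iter (m : ℕ) (ξ : ℝ) (h0 : 0 ≤ ξ) (h1 : ξ ≤ 1) :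
    tentT^[m+1] ξ = tentT (Int.fract (2^m * ξ)) := by
  induction m with
  | zero =>
    simp only [zero_add, pow_zero, one_mul, Function.iterate_one]
    rcases eq_or_lt_of_le h1 with h | h
    · rw [h]; norm_num [tentT]
    · rw [Int.fract_eq_self.2 ⟨h0, h⟩]
  | succ n ih =>
    rw [Function.iterate_succ_apply', ih, tentT_key,
      show 2 * (2^n * ξ) = 2^(n+1) * ξ by ring]




lemma tent_step (m k : ℕ) (t : ℝ) (ht0 : 0 ≤ t) (ht1 : t < 1) (κ : ℕ) :
    ∃ p : ℕ × ℕ,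
      (k:ℝ)/2^m ≤ (p.2:ℝ)/2^p.1 ∧ ((p.2:ℝ)+1)/2^p.1 ≤ ((k:ℝ)+1)/2^m ∧
      ∀ ξ : ℝ, (p.2:ℝ)/2^p.1 ≤ ξ → ξ ≤ ((p.2:ℝ)+1)/2^p.1 →
        |Int.fract ((2:ℝ)^m * ξ) - t| ≤ (1/2)^κ := by
  obtain ⟨s, hs⟩ := exists_pow_lt_of_lt_one
    (lt_min (show (0:ℝ) < 1 - t by linarith) (by positivity : (0:ℝ) < (1/2)^κ)) (by norm_num : (1/2:ℝ) < 1)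
  have hS : (0:ℝ) < 2^s := by positivity
  have hM : (0:ℝ) < 2^m := by positivity
  have hhalf : (1/2:ℝ)^s = 1/2^s := by rw [div_pow]; norm_num
  have hfl : (0:ℤ) ≤ ⌊t * 2^s⌋ := Int.floor_nonneg.2 (by positivity)
  set j : ℕ := ⌊t * 2^s⌋.toNat with hj
  have hjc : (j:ℝ) = (⌊t * 2^s⌋ : ℝ) := by
    rw [hj]; exact_mod_cast congrArg (fun z : ℤ => (z:ℝ)) (Int.toNat_of_nonneg hfl)
  have hjle : (j:ℝ) ≤ t * 2^s := by rw [hjc]; exact Int.floor_le _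
  have hjlt : t * 2^s < (j:ℝ) + 1 := by rw [hjc]; exact Int.lt_floor_add_one _
  have hts : t * 2^s < 2^s - 1 := by
    have h1 : (1:ℝ)/2^s < 1 - t := by rw [← hhalf]; exact lt_of_lt_of_le hs (min_le_left _ _)
    have h2 : (1:ℝ) < (1-t) * 2^s := by
      rw [div_lt_iff₀ hS] at h1; linarith
    nlinarith
  have hj1 : (j:ℝ) + 1 < 2^s := by linarith
  refine ⟨(m + s, k * 2^s + j), ?_, ?_, ?_⟩
  all_goals simp only [pow_add]
  · rw [div_le_div_iff₀ hM (by positivity)]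
    push_cast
    nlinarith [hM.le, hS.le, (by positivity : (0:ℝ) ≤ (j:ℝ) * 2^m)]
  · rw [div_le_div_iff₀ (by positivity) hM]
    push_cast
    nlinarith [hM.le, hS.le]
  · intro ξ hl hr
    set X : ℝ := 2^m * ξ with hX
    have hXS : X * 2^s = ξ * (2^m * 2^s) := by ring
    have hl' : (k:ℝ) * 2^s + j ≤ X * 2^s := by
      rw [div_le_iff₀ (by positivity)] at hl
      push_cast at hl
      rw [hXS]; linarith
    have hr' : X * 2^s ≤ (k:ℝ) * 2^s + j + 1 := by
      rw [le_div_iff₀ (by positivity)] at hr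
      push_cast at hr
      rw [hXS]; linarith
    have hfloor : ⌊X⌋ = (k:ℤ) := by
      rw [Int.floor_eq_iff]
      constructor
      · push_cast; nlinarith [(by positivity : (0:ℝ) ≤ (j:ℝ))]
      · push_cast; nlinarith
    have hfr : Int.fract X = X - k := by
      rw [Int.fract]; rw [hfloor]; push_cast; ring
    have hA : (j:ℝ)/2^s ≤ X - k := by
      rw [div_le_iff₀ hS]; nlinarith
    have hB : X - k ≤ ((j:ℝ)+1)/2^s := by
      rw [le_div_iff₀ hS]; nlinarith
    have hC : (j:ℝ)/2^s ≤ t := by rw [div_le_iff₀ hS]; linarith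
    have hD : t ≤ ((j:ℝ)+1)/2^s := by rw [le_div_iff₀ hS]; linarith
    have hlen : ((j:ℝ)+1)/2^s - (j:ℝ)/2^s = (1/2)^s := by
      rw [hhalf]; ring
    have hsk : (1/2:ℝ)^s ≤ (1/2)^κ := le_of_lt (lt_of_lt_of_le hs (min_le_right _ _))
    rw [hfr, abs_le]
    constructor <;> linarith




def tentEnc : ℕ → ℚ × ℕ := fun n => (Denumerable.eqv (ℚ × ℕ)).symm n

def tentTgt (n : ℕ) : ℝ :=
  if 0 ≤ ((tentEnc n).1:ℝ) ∧ ((tentEnc n).1:ℝ) < 1 then ((tentEnc n).1:ℝ) else 0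

lemma tentTgt_nonneg (n : ℕ) : 0 ≤ tentTgt n := by
  unfold tentTgt; split
  · exact ‹_ ∧ _›.1
  · exact le_refl 0

lemma tentTgt_lt_one (n : ℕ) : tentTgt n < 1 := by
  unfold tentTgt; split
  · exact ‹_ ∧ _›.2
  · norm_num


def tentSeq : ℕ → ℕ × ℕ := fun n =>
  Nat.rec ((0:ℕ), (0:ℕ))
    (fun n p => Classical.choose
      (tent_step p.1 p.2 (tentTgt n) (tentTgt_nonneg n) (tentTgt_lt_one n) (tentEnc n).2)) n

def tentL (n : ℕ) : ℝ := ((tentSeq n).2 : ℝ) / 2 ^ (tentSeq n).1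
def tentR (n : ℕ) : ℝ := (((tentSeq n).2 : ℝ) + 1) / 2 ^ (tentSeq n).1

lemma tentSpec (n : ℕ) : tentL n ≤ tentL (n+1) ∧ tentR (n+1) ≤ tentR n ∧
    ∀ ξ : ℝ, tentL (n+1) ≤ ξ → ξ ≤ tentR (n+1) →
      |Int.fract ((2:ℝ)^(tentSeq n).1 * ξ) - tentTgt n| ≤ (1/2)^(tentEnc n).2 := by
  have h := Classical.choose_spec
    (tent_step (tentSeq n).1 (tentSeq n).2 (tentTgt n) (tentTgt_nonneg n)
      (tentTgt_lt_one n) (tentEnc n).2)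
  exact h

lemma tentLR (n : ℕ) : tentL n ≤ tentR n := by
  unfold tentL tentR
  have h : (0:ℝ) < 2 ^ (tentSeq n).1 := by positivity
  exact (div_le_div_iff_of_pos_right h).2 (by linarith)

lemma tentL_mono : Monotone tentL := monotone_nat_of_le_succ (fun n => (tentSpec n).1)
lemma tentR_anti : Antitone tentR := antitone_nat_of_succ_le (fun n => (tentSpec n).2.1)

lemma tentL_le_R (j n : ℕ) : tentL j ≤ tentR n := by
  rcases le_total j n with h | h
  · exact le_trans (tentL_mono h) (tentLR n)
  · exact le_trans (tentLR j) (tentR_anti h)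

def tentXi : ℝ := ⨆ n, tentL n

lemma tentBdd : BddAbove (Set.range tentL) := by
  refine ⟨tentR 0, ?_⟩
  rintro _ ⟨j, rfl⟩
  exact tentL_le_R j 0

lemma tentXi_L (n : ℕ) : tentL n ≤ tentXi := le_ciSup tentBdd n
lemma tentXi_R (n : ℕ) : tentXi ≤ tentR n := ciSup_le (fun j => tentL_le_R j n)

lemma tentSeq_zero : tentSeq 0 = (0, 0) := rfl

lemma tentXi_mem : tentXi ∈ Set.Icc (0:ℝ) 1 := by
  constructor
  · have h := tentXi_L 0
    simpa [tentL, tentSeq_zero] using h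
  · have h := tentXi_R 0
    simpa [tentR, tentSeq_zero] using h

lemma tentXi_main (q : ℚ) (hq0 : 0 ≤ (q:ℝ)) (hq1 : (q:ℝ) < 1) (κ : ℕ) :
    ∃ m : ℕ, |Int.fract ((2:ℝ)^m * tentXi) - q| ≤ (1/2)^κ := by
  set n := Denumerable.eqv (ℚ × ℕ) (q, κ) with hn
  have he : tentEnc n = (q, κ) := by
    unfold tentEnc
    rw [hn, Equiv.symm_apply_apply]
  have ht : tentTgt n = (q:ℝ) := by
    unfold tentTgt
    rw [he, if_pos ⟨hq0, hq1⟩]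
  refine ⟨(tentSeq n).1, ?_⟩
  have h := (tentSpec n).2.2 tentXi (tentXi_L (n+1)) (tentXi_R (n+1))
  rw [ht, he] at h
  exact h



end TentProof

theorem tent_map_dense_orbit
    (T : ℝ → ℝ) (hT : T = fun x => min (2 * x) (2 - 2 * x)) :
    ∃ ξ ∈ Set.Icc (0:ℝ) 1, ∀ x ∈ Set.Icc (0:ℝ) 1, ∀ ε : ℝ, 0 < ε →
      ∃ m : ℕ, |x - T^[m] ξ| < ε := by
  have hTT : T = tentT := hT
  subst hTT
  refine ⟨tentXi, tentXi_mem, ?_⟩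
  rintro x ⟨hx0, hx1⟩ ε hε
  obtain ⟨k, hk⟩ := exists_pow_lt_of_lt_one
    (lt_min (show (0:ℝ) < ε/8 by linarith) (by norm_num : (0:ℝ) < 1/4))
    (by norm_num : (1/2:ℝ) < 1)
  have hk8 : (1/2:ℝ)^k < ε/8 := lt_of_lt_of_le hk (min_le_left _ _)
  have hk4 : (1/2:ℝ)^k < 1/4 := lt_of_lt_of_le hk (min_le_right _ _)
  have hkpos : (0:ℝ) < (1/2)^k := by positivity
  obtain ⟨q, hq1, hq2⟩ := exists_rat_btwn (show x/2 < x/2 + (1/2)^k by linarith)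
  have hq0 : 0 ≤ (q:ℝ) := le_of_lt (lt_of_le_of_lt (by linarith : (0:ℝ) ≤ x/2) hq1)
  have hqlt1 : (q:ℝ) < 1 := by
    have : x/2 + (1/2)^k < 1 := by linarith
    linarith
  obtain ⟨m₀, hm₀⟩ := tentXi_main q hq0 hqlt1 k
  refine ⟨m₀ + 1, ?_⟩
  rw [tentT_iter m₀ tentXi tentXi_mem.1 tentXi_mem.2]
  set f := Int.fract ((2:ℝ)^m₀ * tentXi) with hf
  have hx2 : tentT (x/2) = x := by
    rw [tentT_eq, abs_of_nonpos (by linarith : 2*(x/2) - 1 ≤ 0)]; ring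
  have hlip := tentT_lip (x/2) f
  have htri : |x/2 - f| ≤ |x/2 - (q:ℝ)| + |(q:ℝ) - f| := abs_sub_le _ _ _
  have h1 : |x/2 - (q:ℝ)| ≤ (1/2)^k := by
    rw [abs_le]; constructor <;> linarith
  have h2 : |(q:ℝ) - f| ≤ (1/2)^k := by rw [abs_sub_comm]; exact hm₀
  calc |x - tentT f| = |tentT (x/2) - tentT f| := by rw [hx2]
    _ ≤ 2 * |x/2 - f| := hlip
    _ ≤ 2 * ((1/2)^k + (1/2)^k) := by linarith
    _ < ε := by linarith
end

section
/- For every x ∈ ℝ and every δ > 0, there exists a natural number n such that the fractional part of n·α lies within δ of the fractional part of x, where α is any fixed irrational number. -/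
set_option maxHeartbeats 1000000

open Set

-- small element of ℤα + ℤ
lemma small_elt (α : ℝ) (hα : Irrational α) (ε : ℝ) (hε : 0 < ε) :
    ∃ m n : ℤ, 0 < (m : ℝ) * α + n ∧ (m : ℝ) * α + n < ε := by
  have hd : Dense ((AddSubgroup.closure {α, 1} : AddSubgroup ℝ) : Set ℝ) := by
    rcases AddSubgroup.dense_or_cyclic (AddSubgroup.closure {α, 1}) with h | ⟨a, ha⟩
    · exact h
    · exfalso
      have h1 : (1 : ℝ) ∈ AddSubgroup.closure ({α, 1} : Set ℝ) :=
        AddSubgroup.subset_closure (by simp)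
      have hαm : α ∈ AddSubgroup.closure ({α, 1} : Set ℝ) :=
        AddSubgroup.subset_closure (by simp)
      rw [ha, AddSubgroup.mem_closure_singleton] at h1 hαm
      obtain ⟨n, hn⟩ := h1
      obtain ⟨m, hm⟩ := hαm
      have hn0 : n ≠ 0 := by rintro rfl; simp at hn
      apply hα
      refine ⟨(m : ℚ) / n, ?_⟩
      have ha0 : a = 1 / n := by
        rw [zsmul_eq_mul] at hn; field_simp at hn ⊢
        linarith [hn]
      rw [← hm, ha0, zsmul_eq_mul]
      push_cast
      field_simp
  obtain ⟨s, hs, hs'⟩ := hd.exists_between hε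
  rw [SetLike.mem_coe, AddSubgroup.mem_closure_pair] at hs
  obtain ⟨m, n, rfl⟩ := hs
  exact ⟨m, n, by simpa using hs'⟩

lemma near_end (α : ℝ) (hα : Irrational α) (ε : ℝ) (hε : 0 < ε) (hε1 : ε ≤ 1) :
    ∃ k : ℕ, 0 < k ∧ (Int.fract ((k : ℝ) * α) < ε ∨ 1 - ε < Int.fract ((k : ℝ) * α)) := by
  obtain ⟨m, n, h1, h2⟩ := small_elt α hα ε hε
  have hm0 : m ≠ 0 := by
    rintro rfl
    simp only [Int.cast_zero, zero_mul, zero_add] at h1 h2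
    have : (0 : ℤ) < n := by exact_mod_cast h1
    have : (n : ℝ) ≥ 1 := by exact_mod_cast this
    linarith
  rcases lt_or_gt_of_ne hm0 with hm | hm
  · -- m < 0 : use k = (-m).toNat, fract near 1
    refine ⟨(-m).toNat, by omega, Or.inr ?_⟩
    have hk : ((((-m).toNat : ℕ)) : ℝ) = -(m : ℝ) := by
      have : ((-m).toNat : ℤ) = -m := Int.toNat_of_nonneg (by omega)
      exact_mod_cast this
    rw [hk]
    have key : Int.fract (-(m : ℝ) * α) = -(m : ℝ) * α - n + 1 := by
      have heq : -(m : ℝ) * α = (-(m : ℝ) * α - n + 1) + ((n - 1 : ℤ) : ℝ) := by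
        push_cast; ring
      rw [heq, Int.fract_add_intCast, Int.fract_eq_self.mpr ⟨by linarith, by linarith⟩]
      push_cast; ring
    rw [key]; linarith
  · -- m > 0 : use k = m.toNat, fract near 0
    refine ⟨m.toNat, by omega, Or.inl ?_⟩
    have hk : ((m.toNat : ℕ) : ℝ) = (m : ℝ) := by
      have : (m.toNat : ℤ) = m := Int.toNat_of_nonneg (by omega)
      exact_mod_cast this
    rw [hk]
    have key : Int.fract ((m : ℝ) * α) = (m : ℝ) * α + n := by
      calc Int.fract ((m : ℝ) * α) = Int.fract ((m : ℝ) * α + n) := (Int.fract_add_intCast _ _).symm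
        _ = (m : ℝ) * α + n := Int.fract_eq_self.mpr ⟨le_of_lt h1, by linarith⟩
    rw [key]; linarith

theorem irrational_rotation_orbit_dense
    (α : ℝ) (hα : Irrational α) (x : ℝ) (δ : ℝ) (hδ : 0 < δ) :
    ∃ n : ℕ, |Int.fract ((n : ℝ) * α) - Int.fract x| < δ := by
  set t := Int.fract x with ht
  have ht0 : 0 ≤ t := Int.fract_nonneg x
  have ht1 : t < 1 := Int.fract_lt_one x
  set ε := min δ 1 with hε_def
  have hε : 0 < ε := lt_min hδ one_pos
  have hεδ : ε ≤ δ := min_le_left _ _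
  have hε1 : ε ≤ 1 := min_le_right _ _
  clear_value t ε
  obtain ⟨k, hk, hcase⟩ := near_end α hα ε hε hε1
  set β := Int.fract ((k : ℝ) * α) with hβ_def
  have hirr : Irrational ((k : ℝ) * α) := by
    exact hα.natCast_mul (by omega)
  have hβpos : 0 < β := by
    rw [hβ_def, Int.fract_pos]
    exact fun h => (hirr.ne_int _ h).elim
  have hβ1 : β < 1 := Int.fract_lt_one _
  have hbeq : (k : ℝ) * α = β + (⌊(k : ℝ) * α⌋ : ℝ) := by
    rw [hβ_def]; rw [Int.fract]; ring
  have hfr : ∀ j : ℕ, Int.fract (((j * k : ℕ) : ℝ) * α) = Int.fract ((j : ℝ) * β) := by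
    intro j
    have h : ((j * k : ℕ) : ℝ) * α = (j : ℝ) * β + ((j * ⌊(k : ℝ) * α⌋ : ℤ) : ℝ) := by
      push_cast
      linear_combination (j : ℝ) * hbeq
    rw [h, Int.fract_add_intCast]
  clear_value β
  rcases hcase with hA | hB
  · -- β < ε : step up from 0
    set j := (⌊t / β⌋).toNat with hj_def
    have hjnn : (0:ℤ) ≤ ⌊t / β⌋ := Int.floor_nonneg.mpr (div_nonneg ht0 hβpos.le)
    have hjc : ((j : ℕ) : ℝ) = ((⌊t / β⌋ : ℤ) : ℝ) := by
      exact_mod_cast congrArg (fun z : ℤ => (z : ℝ)) (Int.toNat_of_nonneg hjnn)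
    have h1 : (j : ℝ) * β ≤ t := by
      rw [hjc]
      have := Int.floor_le (t / β)
      calc ((⌊t / β⌋ : ℤ) : ℝ) * β ≤ (t / β) * β := by nlinarith
        _ = t := by field_simp
    have h2 : t < ((j : ℝ) + 1) * β := by
      rw [hjc]
      have := Int.lt_floor_add_one (t / β)
      calc t = (t / β) * β := by field_simp
        _ < ((⌊t / β⌋ : ℤ) + 1) * β := by nlinarith
    clear_value j
    refine ⟨j * k, ?_⟩
    rw [hfr j, Int.fract_eq_self.mpr ⟨by positivity, by linarith⟩]
    rw [abs_lt]
    constructor <;> nlinarith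
  · -- β > 1 - ε : step down from 1
    set γ := 1 - β with hγ_def
    have hγpos : 0 < γ := by simp [hγ_def]; linarith
    have hγε : γ < ε := by simp [hγ_def]; linarith
    by_cases hsmall : 1 - t < γ
    · refine ⟨k, ?_⟩
      rw [abs_lt]
      constructor <;> [nlinarith; nlinarith]
    · push_neg at hsmall
      set j := (⌊(1 - t) / γ⌋).toNat with hj_def
      have hjnn : (0:ℤ) ≤ ⌊(1 - t) / γ⌋ :=
        Int.floor_nonneg.mpr (div_nonneg (by linarith) hγpos.le)
      have hjc : ((j : ℕ) : ℝ) = ((⌊(1 - t) / γ⌋ : ℤ) : ℝ) := by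
        exact_mod_cast congrArg (fun z : ℤ => (z : ℝ)) (Int.toNat_of_nonneg hjnn)
      have h1 : (j : ℝ) * γ ≤ 1 - t := by
        rw [hjc]
        have := Int.floor_le ((1 - t) / γ)
        calc ((⌊(1 - t) / γ⌋ : ℤ) : ℝ) * γ ≤ ((1 - t) / γ) * γ := by nlinarith
          _ = 1 - t := by field_simp
      have h2 : 1 - t < ((j : ℝ) + 1) * γ := by
        rw [hjc]
        have := Int.lt_floor_add_one ((1 - t) / γ)
        calc 1 - t = ((1 - t) / γ) * γ := by field_simp
          _ < ((⌊(1 - t) / γ⌋ : ℤ) + 1) * γ := by nlinarith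
      have hj1 : 1 ≤ (j : ℝ) := by
        rw [hjc]
        have : (1 : ℝ) ≤ (1 - t) / γ := (le_div_iff₀ hγpos).mpr (by linarith)
        exact_mod_cast le_trans (by exact_mod_cast Int.le_floor.mpr (by exact_mod_cast this)) le_rfl
      have hjγ1 : (j : ℝ) * γ ≤ 1 := by linarith
      clear_value j γ
      have hjγ0 : 0 < (j : ℝ) * γ := by nlinarith
      refine ⟨j * k, ?_⟩
      rw [hfr j]
      have key : Int.fract ((j : ℝ) * β) = 1 - (j : ℝ) * γ := by
        have h : (j : ℝ) * β = (1 - (j : ℝ) * γ) + (((j : ℕ) : ℤ) - 1 : ℤ) := by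
          push_cast
          rw [hγ_def]; ring
        rw [h]
        rw [Int.fract_add_intCast]
        exact Int.fract_eq_self.mpr ⟨by linarith, by linarith⟩
      rw [key, abs_lt]
      constructor <;> nlinarith
end
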